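/- arXiv:2501.07181 — 3 statements merged into one kernel-verified Lean document; each statement's English description precedes it below -/
import Mathlib

section
/- Let α ∈ (0,1], β, ρ₀, K > 0, and let E : [0,ρ₀] → ℝ be a nonnegative absolutely continuous (W^{1,1}) function with E(0) = 0 satisfying ρ^{β-1} E(ρ)^{1-α} ≤ K E'(ρ) for almost every ρ ∈ (0,ρ₀). Then E(ρ) = 0 for all ρ ∈ [0,r], where r^β = max(0, ρ₀^β − K(β/α) E(ρ₀)^α). -/
/-!
Where `E > 0` the inequality reads `(E ^ α)' = α E ^ (α - 1) E' ≥ (α / K) ρ ^ (β - 1)`.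
Since `E' ≥ 0`, `E` is nondecreasing, so if `E ρ > 0` then `E` stays positive on `[ρ, ρ₀]`; there
`E ^ α` is absolutely continuous (a smooth function of `E`), and integrating the inequality gives
`ρ₀ ^ β - ρ ^ β ≤ K (β / α) (E ρ₀ ^ α - E ρ ^ α) < K (β / α) E ρ₀ ^ α`, i.e. `ρ > r`.
-/

open MeasureTheory Set

open scoped NNReal

theorem LipschitzOnWith.comp_absolutelyContinuousOnInterval {X Y : Type*} [PseudoMetricSpace X]
    [PseudoMetricSpace Y] {g : X → Y} {f : ℝ → X} {K : ℝ≥0} {s : Set X} {a b : ℝ}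
    (hg : LipschitzOnWith K g s) (hf : AbsolutelyContinuousOnInterval f a b)
    (hfs : MapsTo f (uIcc a b) s) : AbsolutelyContinuousOnInterval (g ∘ f) a b := by
  rw [absolutelyContinuousOnInterval_iff] at hf ⊢
  intro ε hε
  obtain ⟨δ, hδ, hfδ⟩ := hf (ε / (K + 1)) (by positivity)
  refine ⟨δ, hδ, fun I hI hIδ => ?_⟩
  calc ∑ i ∈ Finset.range I.1, dist (g (f (I.2 i).1)) (g (f (I.2 i).2))
      ≤ ∑ i ∈ Finset.range I.1, K * dist (f (I.2 i).1) (f (I.2 i).2) :=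
        Finset.sum_le_sum fun i hi =>
          hg.dist_le_mul _ (hfs (hI.1 i hi).1) _ (hfs (hI.1 i hi).2)
    _ = K * ∑ i ∈ Finset.range I.1, dist (f (I.2 i).1) (f (I.2 i).2) := (Finset.mul_sum ..).symm
    _ ≤ K * (ε / (K + 1)) := by gcongr; exact (hfδ I hI hIδ).le
    _ < ε := by
      rw [mul_div_assoc', div_lt_iff₀ (by positivity)]
      nlinarith

theorem AbsolutelyContinuousOnInterval.rpow_const {f : ℝ → ℝ} {a b : ℝ}
    (hf : AbsolutelyContinuousOnInterval f a b) (hpos : ∀ t ∈ uIcc a b, 0 < f t) (p : ℝ) :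
    AbsolutelyContinuousOnInterval (fun t => f t ^ p) a b := by
  have hcont := hf.continuousOn
  have hconvex : Convex ℝ (f '' uIcc a b) :=
    (isPreconnected_iff_ordConnected.1 (isPreconnected_uIcc.image f hcont)).convex
  have hsmooth : ContDiffOn ℝ 1 (fun y : ℝ => y ^ p) (f '' uIcc a b) := by
    rintro _ ⟨t, ht, rfl⟩
    exact (Real.contDiffAt_rpow_const_of_ne (hpos t ht).ne').contDiffWithinAt
  obtain ⟨K, hK⟩ :=
    hsmooth.exists_lipschitzOnWith one_ne_zero hconvex (isCompact_uIcc.image_of_continuousOn hcont)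
  exact hK.comp_absolutelyContinuousOnInterval hf (mapsTo_image f _)

theorem AbsolutelyContinuousOnInterval.sub_rpow_le_mul_sub_rpow {F : ℝ → ℝ} {α β K a b : ℝ}
    (hα : 0 < α) (hβ : 0 < β) (hab : a ≤ b)
    (hF : AbsolutelyContinuousOnInterval F a b) (hpos : ∀ t ∈ Icc a b, 0 < F t)
    (hineq : ∀ᵐ t ∂(volume.restrict (Ioo a b)), t ^ (β - 1) * F t ^ (1 - α) ≤ K * deriv F t) :
    b ^ β - a ^ β ≤ K * (β / α) * (F b ^ α - F a ^ α) := by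
  have hFα := hF.rpow_const (by rwa [uIcc_of_le hab]) α
  have hderiv : ∀ᵐ t ∂(volume.restrict (Icc a b)),
      t ^ (β - 1) ≤ K / α * deriv (fun t => F t ^ α) t := by
    rw [← Measure.restrict_congr_set Ioo_ae_eq_Icc]
    filter_upwards [hineq, ae_restrict_mem measurableSet_Ioo,
      ae_restrict_of_ae hF.ae_differentiableAt] with t hineq_t ht hdiff
    have hFt := hpos t (Ioo_subset_Icc_self ht)
    rw [((hdiff (by rw [uIcc_of_le hab]; exact Ioo_subset_Icc_self ht)).hasDerivAt.rpow_const
      (Or.inl hFt.ne')).deriv]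
    have hcancel : F t ^ (1 - α) * F t ^ (α - 1) = 1 := by
      rw [← Real.rpow_add hFt]; simp
    calc t ^ (β - 1) = t ^ (β - 1) * F t ^ (1 - α) * F t ^ (α - 1) := by
          rw [mul_assoc, hcancel, mul_one]
      _ ≤ K * deriv F t * F t ^ (α - 1) := by gcongr
      _ = K / α * (deriv F t * α * F t ^ (α - 1)) := by field_simp
  calc b ^ β - a ^ β = β * ∫ t in a..b, t ^ (β - 1) := by
        rw [integral_rpow (Or.inl (by linarith)), sub_add_cancel]
        field_simp
    _ ≤ β * ∫ t in a..b, K / α * deriv (fun t => F t ^ α) t := by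
        gcongr
        exact intervalIntegral.integral_mono_ae_restrict hab
          (intervalIntegral.intervalIntegrable_rpow' (by linarith))
          (hFα.intervalIntegrable_deriv.const_mul _) hderiv
    _ = K * (β / α) * (F b ^ α - F a ^ α) := by
        rw [intervalIntegral.integral_const_mul, hFα.integral_deriv_eq_sub]
        ring

theorem monotoneOn_intervalIntegral_of_ae_nonneg {f : ℝ → ℝ} {a b : ℝ}
    (hf : IntervalIntegrable f volume a b)
    (hnonneg : ∀ᵐ t ∂(volume.restrict (Ioo a b)), 0 ≤ f t) :
    MonotoneOn (fun x => ∫ t in a..x, f t) (Icc a b) := by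
  intro u hu v hv huv
  have hsub : ∀ w ∈ Icc a b, uIcc a w ⊆ uIcc a b := fun w hw =>
    uIcc_subset_uIcc left_mem_uIcc (Icc_subset_uIcc hw)
  rw [← sub_nonneg, intervalIntegral.integral_interval_sub_left (hf.mono_set (hsub v hv))
    (hf.mono_set (hsub u hu))]
  rw [Measure.restrict_congr_set Ioo_ae_eq_Icc] at hnonneg
  exact intervalIntegral.integral_nonneg_of_ae_restrict huv
    (ae_restrict_of_ae_restrict_of_subset (Icc_subset_Icc hu.1 hv.2) hnonneg)

theorem sub_rpow_le_mul_sub_rpow_of_ae_le {α β K ρ₀ ρ : ℝ} {E E' : ℝ → ℝ}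
    (hα : 0 < α) (hβ : 0 < β) (hK : 0 < K)
    (hE'int : IntegrableOn E' (Ioo 0 ρ₀))
    (hAC : ∀ x ∈ Icc (0:ℝ) ρ₀, E x = ∫ t in (0:ℝ)..x, E' t)
    (hnonneg : ∀ x ∈ Icc (0:ℝ) ρ₀, 0 ≤ E x)
    (hineq : ∀ᵐ t ∂(volume.restrict (Ioo 0 ρ₀)), t ^ (β - 1) * E t ^ (1 - α) ≤ K * E' t)
    (hρ : ρ ∈ Ioc 0 ρ₀) (hEρ : 0 < E ρ) :
    ρ₀ ^ β - ρ ^ β ≤ K * (β / α) * (E ρ₀ ^ α - E ρ ^ α) := by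
  set F : ℝ → ℝ := fun x => ∫ t in (0:ℝ)..x, E' t
  have hρ₀ : 0 ≤ ρ₀ := hρ.1.le.trans hρ.2
  have hE'ii : IntervalIntegrable E' volume 0 ρ₀ :=
    (intervalIntegrable_iff_integrableOn_Ioo_of_le hρ₀).2 hE'int
  have hderiv : ∀ᵐ t ∂(volume.restrict (Ioo 0 ρ₀)), deriv F t = E' t := by
    filter_upwards [ae_restrict_of_ae hE'ii.ae_hasDerivAt_integral,
      ae_restrict_mem measurableSet_Ioo] with t ht htmem
    have htmem' : t ∈ uIcc 0 ρ₀ := by rw [uIcc_of_le hρ₀]; exact Ioo_subset_Icc_self htmem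
    exact (ht htmem' 0 left_mem_uIcc).deriv
  have hE'nonneg : ∀ᵐ t ∂(volume.restrict (Ioo 0 ρ₀)), 0 ≤ E' t := by
    filter_upwards [hineq, ae_restrict_mem measurableSet_Ioo] with t ht htmem
    have hlhs : 0 ≤ t ^ (β - 1) * E t ^ (1 - α) := mul_nonneg (Real.rpow_nonneg htmem.1.le _)
      (Real.rpow_nonneg (hnonneg t (Ioo_subset_Icc_self htmem)) _)
    exact nonneg_of_mul_nonneg_right (hlhs.trans ht) hK
  have hmono : MonotoneOn F (Icc 0 ρ₀) := monotoneOn_intervalIntegral_of_ae_nonneg hE'ii hE'nonneg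
  have hEF : EqOn E F (Icc 0 ρ₀) := hAC
  have hρmem : ρ ∈ Icc 0 ρ₀ := Ioc_subset_Icc_self hρ
  have hρ₀mem : ρ₀ ∈ Icc 0 ρ₀ := right_mem_Icc.2 hρ₀
  have hF : AbsolutelyContinuousOnInterval F ρ ρ₀ :=
    (hE'ii.absolutelyContinuousOnInterval_intervalIntegral left_mem_uIcc).mono
      (uIcc_subset_uIcc (Icc_subset_uIcc hρmem) right_mem_uIcc)
  have hFpos : ∀ t ∈ Icc ρ ρ₀, 0 < F t := fun t ht =>
    (hEρ.trans_eq (hEF hρmem)).trans_le (hmono hρmem ⟨hρ.1.le.trans ht.1, ht.2⟩ ht.1)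
  have hFineq : ∀ᵐ t ∂(volume.restrict (Ioo ρ ρ₀)),
      t ^ (β - 1) * F t ^ (1 - α) ≤ K * deriv F t := by
    refine ae_restrict_of_ae_restrict_of_subset (Ioo_subset_Ioo_left hρ.1.le) ?_
    filter_upwards [hineq, hderiv, ae_restrict_mem measurableSet_Ioo] with t ht hFt htmem
    rwa [hFt, ← hEF (Ioo_subset_Icc_self htmem)]
  rw [hEF hρmem, hEF hρ₀mem]
  exact hF.sub_rpow_le_mul_sub_rpow hα hβ hρ.2 hFpos hFineq

theorem stmt0_general (α β ρ₀ K : ℝ) (hα : α ∈ Ioc (0:ℝ) 1) (hβ : 0 < β) (hρ₀ : 0 < ρ₀)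
    (hK : 0 < K) (E E' : ℝ → ℝ)
    (hE'int : IntegrableOn E' (Ioo 0 ρ₀))
    (hAC : ∀ ρ ∈ Icc (0:ℝ) ρ₀, E ρ = ∫ t in (0:ℝ)..ρ, E' t)
    (hnonneg : ∀ ρ ∈ Icc (0:ℝ) ρ₀, 0 ≤ E ρ)
    (hineq : ∀ᵐ ρ ∂(volume.restrict (Ioo 0 ρ₀)),
      ρ ^ (β - 1) * E ρ ^ (1 - α) ≤ K * E' ρ)
    (r : ℝ)
    (hr : r ^ β = max 0 (ρ₀ ^ β - K * (β / α) * E ρ₀ ^ α)) :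
    ∀ ρ ∈ Icc (0:ℝ) r, E ρ = 0 := by
  intro ρ hρ
  have hc : 0 < K * (β / α) := by have := hα.1; positivity
  have hEρ₀ : 0 ≤ E ρ₀ ^ α := Real.rpow_nonneg (hnonneg ρ₀ (right_mem_Icc.2 hρ₀.le)) α
  have hρρ₀ : ρ ≤ ρ₀ := by
    refine hρ.2.trans ((Real.rpow_le_rpow_iff (hρ.1.trans hρ.2) hρ₀.le hβ).1 ?_)
    rw [hr]
    exact max_le (Real.rpow_nonneg hρ₀.le β) (sub_le_self _ (mul_nonneg hc.le hEρ₀))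
  rcases hρ.1.eq_or_lt with rfl | hρ0
  · simpa using hAC 0 (left_mem_Icc.2 hρ₀.le)
  by_contra hne
  have hEρ : 0 < E ρ := (hnonneg ρ ⟨hρ.1, hρρ₀⟩).lt_of_ne' hne
  have hgrowth := sub_rpow_le_mul_sub_rpow_of_ae_le hα.1 hβ hK hE'int hAC hnonneg hineq
    ⟨hρ0, hρρ₀⟩ hEρ
  have hρr : ρ ^ β ≤ r ^ β := Real.rpow_le_rpow hρ.1 hρ.2 hβ.le
  have hEρα : 0 < K * (β / α) * E ρ ^ α := mul_pos hc (Real.rpow_pos_of_pos hEρ α)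
  rw [hr] at hρr
  exact hρr.not_gt (max_lt (Real.rpow_pos_of_pos hρ0 β) (by linarith))

theorem stmt0 (α β ρ₀ K : ℝ) (hα : α ∈ Ioc (0:ℝ) 1) (hβ : 0 < β) (hρ₀ : 0 < ρ₀)
    (hK : 0 < K) (E E' : ℝ → ℝ)
    (hE'int : IntegrableOn E' (Ioo 0 ρ₀))
    (hAC : ∀ ρ ∈ Icc (0:ℝ) ρ₀, E ρ = ∫ t in (0:ℝ)..ρ, E' t)
    (hnonneg : ∀ ρ ∈ Icc (0:ℝ) ρ₀, 0 ≤ E ρ)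
    (hE0 : E 0 = 0)
    (hineq : ∀ᵐ ρ ∂(volume.restrict (Ioo 0 ρ₀)),
      ρ ^ (β - 1) * E ρ ^ (1 - α) ≤ K * E' ρ)
    (r : ℝ) (hr0 : 0 ≤ r)
    (hr : r ^ β = max 0 (ρ₀ ^ β - K * (β / α) * E ρ₀ ^ α)) :
    ∀ ρ ∈ Icc (0:ℝ) r, E ρ = 0 :=
  stmt0_general α β ρ₀ K hα hβ hρ₀ hK E E' hE'int hAC hnonneg hineq r hr
end

section
/- Let α ∈ (0,1], ρ₀, K > 0, and let E : [0,ρ₀] → ℝ be a nonnegative absolutely continuous function with E(0) = 0 satisfying E(ρ)^{1-α} ≤ K ρ E'(ρ) for almost every ρ ∈ (0,ρ₀). Then E(ρ) = 0 for all ρ ∈ [0,r], where r = ρ₀ e^{−(K/α) E(ρ₀)^α}. -/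
open MeasureTheory Set Filter Topology

/-- MVT consequence: for `0 < u ≤ v` and `0 < α ≤ 1`,
`α * v^(α-1) * (v - u) ≤ v^α - u^α`. -/
lemma aux_mvt_rpow {α : ℝ} (hα0 : 0 < α) (hα1 : α ≤ 1) {u v : ℝ} (hu : 0 < u) (huv : u ≤ v) :
    α * v ^ (α - 1) * (v - u) ≤ v ^ α - u ^ α := by
  rcases eq_or_lt_of_le huv with rfl | hlt
  · simp
  · have hcont : ContinuousOn (fun s : ℝ => s ^ α) (Icc u v) := by
      apply ContinuousOn.rpow_const continuousOn_id
      intro s hs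
      exact Or.inl (hu.trans_le hs.1).ne'
    have hderiv : ∀ s ∈ Ioo u v, HasDerivAt (fun s : ℝ => s ^ α) (α * s ^ (α - 1)) s := by
      intro s hs
      exact Real.hasDerivAt_rpow_const (Or.inl (hu.trans hs.1).ne')
    obtain ⟨ξ, hξ, hslope⟩ :=
      exists_hasDerivAt_eq_slope (fun s : ℝ => s ^ α) (fun s => α * s ^ (α - 1)) hlt hcont hderiv
    have hξpos : 0 < ξ := hu.trans hξ.1
    have h1 : v ^ (α - 1) ≤ ξ ^ (α - 1) :=
      Real.rpow_le_rpow_of_nonpos hξpos hξ.2.le (by linarith)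
    have hvu : 0 < v - u := sub_pos.mpr hlt
    have : α * v ^ (α - 1) * (v - u) ≤ α * ξ ^ (α - 1) * (v - u) :=
      mul_le_mul_of_nonneg_right (mul_le_mul_of_nonneg_left h1 hα0.le) hvu.le
    calc α * v ^ (α - 1) * (v - u) ≤ α * ξ ^ (α - 1) * (v - u) := this
      _ = (v ^ α - u ^ α) / (v - u) * (v - u) := by rw [hslope]
      _ = v ^ α - u ^ α := div_mul_cancel₀ _ hvu.ne'

theorem stmt1 (α ρ₀ K : ℝ) (hα : α ∈ Ioc (0:ℝ) 1) (hρ₀ : 0 < ρ₀)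
    (hK : 0 < K) (E E' : ℝ → ℝ)
    (hE'int : IntegrableOn E' (Ioo 0 ρ₀))
    (hAC : ∀ ρ ∈ Icc (0:ℝ) ρ₀, E ρ = ∫ t in (0:ℝ)..ρ, E' t)
    (hnonneg : ∀ ρ ∈ Icc (0:ℝ) ρ₀, 0 ≤ E ρ)
    (hE0 : E 0 = 0)
    (hineq : ∀ᵐ ρ ∂(volume.restrict (Ioo 0 ρ₀)),
      E ρ ^ (1 - α) ≤ K * ρ * E' ρ) :
    ∀ ρ ∈ Icc (0:ℝ) (ρ₀ * Real.exp (-(K / α) * E ρ₀ ^ α)), E ρ = 0 := by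
  obtain ⟨hα0, hα1⟩ := hα
  set r : ℝ := ρ₀ * Real.exp (-(K / α) * E ρ₀ ^ α) with hrdef
  have hEρ₀nn : 0 ≤ E ρ₀ := hnonneg ρ₀ ⟨hρ₀.le, le_rfl⟩
  have hrρ₀ : r ≤ ρ₀ := by
    have : Real.exp (-(K / α) * E ρ₀ ^ α) ≤ 1 := by
      rw [Real.exp_le_one_iff]
      have : 0 ≤ K / α * E ρ₀ ^ α :=
        mul_nonneg (div_nonneg hK.le hα0.le) (Real.rpow_nonneg hEρ₀nn α)
      linarith
    nlinarith
  -- integrability of E' on Icc 0 ρ₀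
  have hIntIcc : IntegrableOn E' (Icc 0 ρ₀) :=
    (integrableOn_Icc_iff_integrableOn_Ioo).mpr hE'int
  have hII : ∀ x ∈ Icc (0:ℝ) ρ₀, ∀ z ∈ Icc (0:ℝ) ρ₀, IntervalIntegrable E' volume x z := by
    intro x hx z hz
    exact (hIntIcc.mono_set (uIcc_subset_Icc hx hz)).intervalIntegrable
  -- difference formula
  have hdiff : ∀ x ∈ Icc (0:ℝ) ρ₀, ∀ z ∈ Icc (0:ℝ) ρ₀,
      E z - E x = ∫ t in x..z, E' t := by
    intro x hx z hz
    rw [hAC x hx, hAC z hz]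
    exact intervalIntegral.integral_interval_sub_left
      (hII 0 ⟨le_rfl, hρ₀.le⟩ z hz) (hII 0 ⟨le_rfl, hρ₀.le⟩ x hx)
  -- E' nonneg a.e. and the key inequality, in implication form
  have hineq' : ∀ᵐ t ∂volume, t ∈ Ioo (0:ℝ) ρ₀ → E t ^ (1 - α) ≤ K * t * E' t :=
    (ae_restrict_iff' measurableSet_Ioo).mp hineq
  have hE'nn : ∀ᵐ t ∂volume, t ∈ Ioo (0:ℝ) ρ₀ → 0 ≤ E' t := by
    filter_upwards [hineq'] with t ht hmem
    have h1 : (0:ℝ) ≤ E t ^ (1 - α) :=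
      Real.rpow_nonneg (hnonneg t ⟨hmem.1.le, hmem.2.le⟩) _
    have hKt : 0 < K * t := mul_pos hK hmem.1
    nlinarith [ht hmem]
  -- monotonicity
  have hmono : ∀ x ∈ Icc (0:ℝ) ρ₀, ∀ z ∈ Icc (0:ℝ) ρ₀, x ≤ z → E x ≤ E z := by
    intro x hx z hz hxz
    have h := hdiff x hx z hz
    have hpos : 0 ≤ ∫ t in x..z, E' t := by
      rw [intervalIntegral.integral_of_le hxz, integral_Ioc_eq_integral_Ioo]
      apply setIntegral_nonneg_ae measurableSet_Ioo
      filter_upwards [hE'nn] with t ht hmem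
      exact ht ⟨lt_of_le_of_lt hx.1 hmem.1, lt_of_lt_of_le hmem.2 hz.2⟩
    linarith
  -- continuity of E on Icc 0 ρ₀
  have hEcont : ContinuousOn E (Icc 0 ρ₀) := by
    have h1 : ContinuousOn (fun x => ∫ t in (0:ℝ)..x, E' t) (Icc 0 ρ₀) := by
      have := intervalIntegral.continuousOn_primitive_interval
        (f := E') (μ := volume) (a := 0) (b := ρ₀)
        (by rwa [uIcc_of_le hρ₀.le])
      rwa [uIcc_of_le hρ₀.le] at this
    exact h1.congr hAC
  -- main argument
  intro ρ hρ
  by_contra hne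
  have hρmem : ρ ∈ Icc (0:ℝ) ρ₀ := ⟨hρ.1, hρ.2.trans hrρ₀⟩
  have hρE : 0 < E ρ := lt_of_le_of_ne (hnonneg ρ hρmem) (Ne.symm hne)
  have hρpos : 0 < ρ := by
    rcases lt_or_eq_of_le hρ.1 with h | h
    · exact h
    · exfalso; apply hne; rw [← h]; exact hE0
  have hEρ₀pos : 0 < E ρ₀ := hρE.trans_le (hmono ρ hρmem ρ₀ ⟨hρ₀.le, le_rfl⟩ hρmem.2)
  have hrlt : r < ρ₀ := by
    have : Real.exp (-(K / α) * E ρ₀ ^ α) < 1 := by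
      rw [Real.exp_lt_one_iff]
      have : 0 < K / α * E ρ₀ ^ α :=
        mul_pos (div_pos hK hα0) (Real.rpow_pos_of_pos hEρ₀pos α)
      linarith
    nlinarith
  have hρltρ₀ : ρ < ρ₀ := lt_of_le_of_lt hρ.2 hrlt
  -- key integral inequality
  have key1 : ∀ x, ρ ≤ x → ∀ z, x < z → z ≤ ρ₀ →
      E x ^ (1 - α) / K * (Real.log z - Real.log x) ≤ E z - E x := by
    intro x hρx z hxz hzρ₀
    have hxpos : 0 < x := hρpos.trans_le hρx
    have hxmem : x ∈ Icc (0:ℝ) ρ₀ := ⟨hxpos.le, hxz.le.trans hzρ₀⟩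
    have hzmem : z ∈ Icc (0:ℝ) ρ₀ := ⟨(hxpos.trans hxz).le, hzρ₀⟩
    have hsub : Ioo x z ⊆ Ioo 0 ρ₀ := fun t ht =>
      ⟨hxpos.trans ht.1, lt_of_lt_of_le ht.2 hzρ₀⟩
    set c : ℝ := E x ^ (1 - α) with hc
    have hcnn : 0 ≤ c := Real.rpow_nonneg (hnonneg x hxmem) _
    -- pointwise a.e. bound on Ioo x z
    have hae : ∀ᵐ t ∂(volume.restrict (Ioo x z)), c / (K * t) ≤ E' t := by
      filter_upwards [ae_restrict_mem measurableSet_Ioo,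
        (ae_restrict_of_ae hineq').filter_mono
          (ae_mono (Measure.restrict_mono hsub le_rfl))] with t ht h2
      have htmem : t ∈ Ioo (0:ℝ) ρ₀ := hsub ht
      have hKt : 0 < K * t := mul_pos hK htmem.1
      have hEx : E x ≤ E t := hmono x hxmem t ⟨htmem.1.le, htmem.2.le⟩ ht.1.le
      have h3 : c ≤ E t ^ (1 - α) :=
        Real.rpow_le_rpow (hnonneg x hxmem) hEx (by linarith)
      have h4 : c ≤ K * t * E' t := h3.trans (h2 htmem)
      rw [div_le_iff₀ hKt]
      linarith [h4, mul_comm (E' t) (K * t)]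
    -- integrability of the lower function
    have hcont_low : ContinuousOn (fun t : ℝ => c / (K * t)) (Icc x z) := by
      apply continuousOn_const.div ((continuous_const.mul continuous_id).continuousOn)
      intro t ht
      exact (mul_pos hK (hxpos.trans_le ht.1)).ne'
    have hint_low : IntegrableOn (fun t : ℝ => c / (K * t)) (Ioo x z) :=
      (hcont_low.integrableOn_Icc).mono_set Ioo_subset_Icc_self
    have hint_up : IntegrableOn E' (Ioo x z) := hE'int.mono_set hsub
    have hle : ∫ t in Ioo x z, c / (K * t) ≤ ∫ t in Ioo x z, E' t :=
      setIntegral_mono_ae_restrict hint_low hint_up hae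
    -- compute the left integral
    have hcomp : ∫ t in Ioo x z, c / (K * t) = c / K * (Real.log z - Real.log x) := by
      rw [← integral_Ioc_eq_integral_Ioo, ← intervalIntegral.integral_of_le hxz.le]
      have : (fun t : ℝ => c / (K * t)) = fun t : ℝ => (c / K) * t⁻¹ := by
        funext t; ring
      rw [this, intervalIntegral.integral_const_mul,
        integral_inv_of_pos hxpos (hxpos.trans hxz),
        Real.log_div (hxpos.trans hxz).ne' hxpos.ne']
    have hdz : E z - E x = ∫ t in Ioo x z, E' t := by
      rw [hdiff x hxmem z hzmem, intervalIntegral.integral_of_le hxz.le,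
        integral_Ioc_eq_integral_Ioo]
    rw [hdz, ← hcomp]
    exact hle
  -- fencing argument on [ρ, ρ₀]
  have fence : -(E ρ₀ ^ α) ≤ -(E ρ ^ α) - α / K * (Real.log ρ₀ - Real.log ρ) := by
    have hfcont : ContinuousOn (fun z => -(E z ^ α)) (Icc ρ ρ₀) := by
      apply ContinuousOn.neg
      apply ContinuousOn.rpow_const (hEcont.mono (Icc_subset_Icc hρmem.1 le_rfl))
      intro z hz; exact Or.inr hα0.le
    have hBcont : ContinuousOn
        (fun z => -(E ρ ^ α) - α / K * (Real.log z - Real.log ρ)) (Icc ρ ρ₀) := by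
      apply ContinuousOn.sub continuousOn_const
      apply ContinuousOn.mul continuousOn_const
      apply ContinuousOn.sub _ continuousOn_const
      exact Real.continuousOn_log.mono fun z hz => (hρpos.trans_le hz.1).ne'
    have hB' : ∀ x ∈ Ico ρ ρ₀, HasDerivWithinAt
        (fun z => -(E ρ ^ α) - α / K * (Real.log z - Real.log ρ))
        (-(α / K * x⁻¹)) (Ici x) x := by
      intro x hx
      have hxpos : 0 < x := hρpos.trans_le hx.1
      have : HasDerivAt (fun z => -(E ρ ^ α) - α / K * (Real.log z - Real.log ρ))
          (-(α / K * x⁻¹)) x := by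
        have h1 : HasDerivAt (fun z => Real.log z - Real.log ρ) x⁻¹ x :=
          (Real.hasDerivAt_log hxpos.ne').sub_const _
        have h2 := (h1.const_mul (α / K)).const_sub (-(E ρ ^ α))
        simpa using h2
      exact this.hasDerivWithinAt
    have bound : ∀ x ∈ Ico ρ ρ₀, ∀ r', -(α / K * x⁻¹) < r' →
        ∃ᶠ z in 𝓝[>] x, slope (fun z => -(E z ^ α)) x z < r' := by
      intro x hx r' hr'
      have hxpos : 0 < x := hρpos.trans_le hx.1
      have hxmem : x ∈ Icc (0:ℝ) ρ₀ := ⟨hxpos.le, hx.2.le⟩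
      have hExpos : 0 < E x := hρE.trans_le (hmono ρ hρmem x hxmem hx.1)
      -- the comparison function
      set g : ℝ → ℝ := fun z =>
        -(α * (E z ^ (α - 1) * E x ^ (1 - α)) / K * slope Real.log x z) with hg
      -- tendsto of E within
      have hEx_t : Tendsto E (𝓝[>] x) (𝓝 (E x)) := by
        rw [← nhdsWithin_Ioo_eq_nhdsGT hx.2]
        exact (hEcont x hxmem).mono (fun t ht => ⟨(hxpos.trans ht.1).le, ht.2.le⟩)
      have hT1 : Tendsto (fun z => E z ^ (α - 1)) (𝓝[>] x) (𝓝 (E x ^ (α - 1))) :=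
        ((Real.continuousAt_rpow_const (E x) (α - 1) (Or.inl hExpos.ne')).tendsto).comp hEx_t
      have hT2 : Tendsto (slope Real.log x) (𝓝[>] x) (𝓝 x⁻¹) :=
        ((hasDerivAt_iff_tendsto_slope).mp (Real.hasDerivAt_log hxpos.ne')).mono_left
          (nhdsWithin_mono x fun z hz => ne_of_gt hz)
      have hgT : Tendsto g (𝓝[>] x) (𝓝 (-(α / K * x⁻¹))) := by
        have h1 : Tendsto (fun z => -(α * (E z ^ (α - 1) * E x ^ (1 - α)) / K * slope Real.log x z))
            (𝓝[>] x) (𝓝 (-(α * (E x ^ (α - 1) * E x ^ (1 - α)) / K * x⁻¹))) := by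
          exact (((((hT1.mul tendsto_const_nhds).const_mul α).div_const K).mul hT2)).neg
        have h2 : E x ^ (α - 1) * E x ^ (1 - α) = 1 := by
          rw [← Real.rpow_add hExpos]
          norm_num
        rw [hg]
        convert h1 using 2
        rw [h2]; ring
      have hev1 : ∀ᶠ z in 𝓝[>] x, g z < r' := hgT.eventually_lt_const hr'
      have hev2 : ∀ᶠ z in 𝓝[>] x, z ∈ Ioo x ρ₀ := Ioo_mem_nhdsGT_of_mem ⟨le_rfl, hx.2⟩
      have hev3 : ∀ᶠ z in 𝓝[>] x, slope (fun z => -(E z ^ α)) x z < r' := by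
        filter_upwards [hev1, hev2] with z hz1 hz2
        refine lt_of_le_of_lt ?_ hz1
        -- slope f x z ≤ g z
        have hxz : x < z := hz2.1
        have hzρ₀ : z ≤ ρ₀ := hz2.2.le
        have hzmem : z ∈ Icc (0:ℝ) ρ₀ := ⟨(hxpos.trans hxz).le, hzρ₀⟩
        have hEz : E x ≤ E z := hmono x hxmem z hzmem hxz.le
        have hstep1 := key1 x hx.1 z hxz hzρ₀
        have hstep2 := aux_mvt_rpow hα0 hα1 hExpos hEz
        have hnn : 0 ≤ α * E z ^ (α - 1) :=
          mul_nonneg hα0.le (Real.rpow_nonneg (hExpos.le.trans hEz) _)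
        have hcomb : α * (E z ^ (α - 1) * E x ^ (1 - α)) / K
            * (Real.log z - Real.log x) ≤ E z ^ α - E x ^ α := by
          have h5 := mul_le_mul_of_nonneg_left hstep1 hnn
          calc α * (E z ^ (α - 1) * E x ^ (1 - α)) / K * (Real.log z - Real.log x)
              = α * E z ^ (α - 1) * (E x ^ (1 - α) / K * (Real.log z - Real.log x)) := by ring
            _ ≤ α * E z ^ (α - 1) * (E z - E x) := h5
            _ ≤ E z ^ α - E x ^ α := hstep2
        have hzx : 0 < z - x := sub_pos.mpr hxz
        simp only [hg]
        rw [slope_def_field, slope_def_field]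
        rw [show -(α * (E z ^ (α - 1) * E x ^ (1 - α)) / K
            * ((Real.log z - Real.log x) / (z - x)))
          = -(α * (E z ^ (α - 1) * E x ^ (1 - α)) / K
            * (Real.log z - Real.log x)) / (z - x) by ring]
        gcongr
        linarith [hcomb]
      exact hev3.frequently
    have := image_le_of_liminf_slope_right_le_deriv_boundary hfcont
      (by simp : -(E ρ ^ α) ≤ -(E ρ ^ α) - α / K * (Real.log ρ - Real.log ρ))
      hBcont hB' bound
    exact this ⟨hρltρ₀.le, le_rfl⟩
  -- conclude
  have hEρα : 0 < E ρ ^ α := Real.rpow_pos_of_pos hρE α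
  have hlogr : Real.log r = Real.log ρ₀ + (-(K / α) * E ρ₀ ^ α) := by
    rw [hrdef, Real.log_mul hρ₀.ne' (Real.exp_ne_zero _), Real.log_exp]
  have hlogρ : Real.log ρ ≤ Real.log r := Real.log_le_log hρpos hρ.2
  have h2 : Real.log ρ ≤ Real.log ρ₀ - K / α * E ρ₀ ^ α := by
    rw [hlogr] at hlogρ; linarith
  have h3 : α / K * (K / α * E ρ₀ ^ α) ≤ α / K * (Real.log ρ₀ - Real.log ρ) :=
    mul_le_mul_of_nonneg_left (by linarith) (div_nonneg hα0.le hK.le)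
  have h4 : α / K * (K / α * E ρ₀ ^ α) = E ρ₀ ^ α := by
    field_simp
  linarith [fence, h3, h4 ▸ h3]
end

section
/- Let α ∈ (0,1), K > 0, ρ₁ > ρ₀ > 0, ε > 0, and let E : [ρ₀,ρ₁] → ℝ be a nonnegative absolutely continuous function satisfying E(ρ)^{1-α} ≤ K E'(ρ) + ε(ρ−ρ₀)^{(1-α)/α} for almost every ρ ∈ (ρ₀,ρ₁). Set E⋆ = ((α/(2K))(ρ₁−ρ₀))^{1/α} and ε⋆ = (1/2)(α/(2K))^{(1-α)/α}. If E(ρ₁) ≤ E⋆ and ε ≤ ε⋆, then E(ρ₀) = 0. -/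
/-!
Compare `E` with the explicit profile `G ρ = (c (ρ - ρ₀))^(1/α)`, `c = α / (2K)`, which vanishes at
`ρ₀`, equals `E⋆` at `ρ₁` and is a supersolution: `K G' + ε (ρ - ρ₀)^((1-α)/α) ≤ G^(1-α)` as soon as
`ε ≤ ε⋆`. Wherever `G < E`, monotonicity of `t ↦ t^(1-α)` and the differential inequality give
`G' ≤ E'`, so `G - E` cannot cross from negative (at `ρ₀`, if `E ρ₀ > 0`) to nonnegative (at `ρ₁`).
-/

open MeasureTheory Set

theorem continuousOn_of_eq_add_integral {a b : ℝ} {u u' : ℝ → ℝ} (hab : a ≤ b)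
    (hu' : IntegrableOn u' (Icc a b)) (hu : ∀ x ∈ Icc a b, u x = u a + ∫ t in a..x, u' t) :
    ContinuousOn u (Icc a b) := by
  have hprim := intervalIntegral.continuousOn_primitive_interval (a := a) (b := b) (μ := volume)
    (f := u') (by rwa [uIcc_of_le hab])
  rw [uIcc_of_le hab] at hprim
  exact (continuousOn_const.add hprim).congr hu

theorem neg_of_ae_deriv_nonpos_of_neg {a b : ℝ} {u u' : ℝ → ℝ} (hab : a ≤ b)
    (hu' : IntegrableOn u' (Icc a b)) (hu : ∀ x ∈ Icc a b, u x = u a + ∫ t in a..x, u' t)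
    (hderiv : ∀ᵐ x ∂(volume.restrict (Ioo a b)), u x < 0 → u' x ≤ 0) (ha : u a < 0) :
    u b < 0 := by
  by_contra! hb
  set S := Icc a b ∩ u ⁻¹' Ici 0
  have hSne : S.Nonempty := ⟨b, ⟨hab, le_rfl⟩, hb⟩
  have hSbdd : BddBelow S := ⟨a, fun x hx => hx.1.1⟩
  have hSclosed : IsClosed S :=
    (continuousOn_of_eq_add_integral hab hu' hu).preimage_isClosed_of_isClosed isClosed_Icc
      isClosed_Ici
  obtain ⟨⟨has, hsb⟩, hus⟩ : sInf S ∈ S := hSclosed.csInf_mem hSne hSbdd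
  set s := sInf S
  have hneg : ∀ x ∈ Ioo a s, u x < 0 := fun x hx => by
    by_contra! hux
    exact hx.2.not_ge (csInf_le hSbdd ⟨⟨hx.1.le, hx.2.le.trans hsb⟩, hux⟩)
  have hint : ∫ t in a..s, u' t ≤ 0 := by
    rw [intervalIntegral.integral_of_le has, ← setIntegral_congr_set Ioo_ae_eq_Ioc]
    refine integral_nonpos_of_ae ?_
    filter_upwards [ae_restrict_of_ae_restrict_of_subset (Ioo_subset_Ioo le_rfl hsb) hderiv,
      ae_restrict_mem measurableSet_Ioo] with x hx hxs
    exact hx (hneg x hxs)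
  have := hu s ⟨has, hsb⟩
  simp only [mem_preimage, mem_Ici] at hus
  linarith

theorem lt_of_ae_deriv_le_of_lt {a b : ℝ} {f f' g g' : ℝ → ℝ} (hab : a ≤ b)
    (hf' : IntegrableOn f' (Icc a b)) (hf : ∀ x ∈ Icc a b, f x = f a + ∫ t in a..x, f' t)
    (hg' : IntegrableOn g' (Icc a b)) (hg : ∀ x ∈ Icc a b, g x = g a + ∫ t in a..x, g' t)
    (hderiv : ∀ᵐ x ∂(volume.restrict (Ioo a b)), f x < g x → f' x ≤ g' x) (ha : f a < g a) :
    f b < g b := by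
  have hdiff : ∀ x ∈ Icc a b, (f - g) x = (f - g) a + ∫ t in a..x, (f' - g') t := fun x hx => by
    have hIcc : Icc a x ⊆ Icc a b := Icc_subset_Icc le_rfl hx.2
    simp only [Pi.sub_apply]
    rw [intervalIntegral.integral_sub
      ((intervalIntegrable_iff_integrableOn_Icc_of_le hx.1).mpr (hf'.mono_set hIcc))
      ((intervalIntegrable_iff_integrableOn_Icc_of_le hx.1).mpr (hg'.mono_set hIcc)),
      hf x hx, hg x hx]
    ring
  have hderiv' : ∀ᵐ x ∂(volume.restrict (Ioo a b)), (f - g) x < 0 → (f' - g') x ≤ 0 := by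
    filter_upwards [hderiv] with x hx hfg
    exact sub_nonpos.mpr (hx (sub_neg.mp hfg))
  have : f b - g b < 0 :=
    neg_of_ae_deriv_nonpos_of_neg (u := f - g) hab (hf'.sub hg') hdiff hderiv' (sub_neg.mpr ha)
  exact sub_neg.mp this

theorem hasDerivAt_mul_sub_rpow_inv {α c ρ₀ : ℝ} (hα0 : 0 < α) (hα1 : α ≤ 1) (ρ : ℝ) :
    HasDerivAt (fun ρ => (c * (ρ - ρ₀)) ^ (1 / α)) (c / α * (c * (ρ - ρ₀)) ^ ((1 - α) / α)) ρ := by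
  have hlin : HasDerivAt (fun t => c * (t - ρ₀)) c ρ := by
    simpa using ((hasDerivAt_id ρ).sub_const ρ₀).const_mul c
  have hpow := (Real.hasDerivAt_rpow_const (x := c * (ρ - ρ₀))
    (Or.inr ((one_le_div hα0).mpr hα1))).comp ρ hlin
  refine hpow.congr_deriv ?_
  have : 1 / α - 1 = (1 - α) / α := by field_simp
  rw [this]
  ring

theorem continuous_mul_sub_rpow {c ρ₀ β : ℝ} (hβ : 0 ≤ β) :
    Continuous fun ρ => (c * (ρ - ρ₀)) ^ β :=
  (Real.continuous_rpow_const hβ).comp (by fun_prop)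

theorem supersolution_le {α K ε ρ₀ ρ : ℝ} (hα : 0 < α) (hK : 0 < K)
    (hεsmall : ε ≤ (1 / 2) * (α / (2 * K)) ^ ((1 - α) / α)) (hρ : ρ₀ ≤ ρ) :
    K * (α / (2 * K) / α * (α / (2 * K) * (ρ - ρ₀)) ^ ((1 - α) / α))
        + ε * (ρ - ρ₀) ^ ((1 - α) / α)
      ≤ ((α / (2 * K) * (ρ - ρ₀)) ^ (1 / α)) ^ (1 - α) := by
  set c := α / (2 * K)
  have hc : 0 ≤ c := by positivity
  have hd : 0 ≤ ρ - ρ₀ := sub_nonneg.mpr hρ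
  have hpow : ((c * (ρ - ρ₀)) ^ (1 / α)) ^ (1 - α) = (c * (ρ - ρ₀)) ^ ((1 - α) / α) := by
    rw [← Real.rpow_mul (by positivity)]
    congr 1
    ring
  have hderiv : K * (c / α * (c * (ρ - ρ₀)) ^ ((1 - α) / α))
      = (1 / 2) * (c * (ρ - ρ₀)) ^ ((1 - α) / α) := by
    simp only [c]
    field_simp
  have hforce : ε * (ρ - ρ₀) ^ ((1 - α) / α) ≤ (1 / 2) * (c * (ρ - ρ₀)) ^ ((1 - α) / α) := by
    rw [Real.mul_rpow hc hd, ← mul_assoc]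
    exact mul_le_mul_of_nonneg_right hεsmall (by positivity)
  rw [hpow, hderiv]
  linarith

theorem stmt2_general (α K ρ₀ ρ₁ ε : ℝ) (hα : α ∈ Ioo (0:ℝ) 1) (hK : 0 < K)
    (hρ : ρ₀ < ρ₁) (E E' : ℝ → ℝ)
    (hE'int : IntegrableOn E' (Ioo ρ₀ ρ₁))
    (hAC : ∀ ρ ∈ Icc ρ₀ ρ₁, E ρ = E ρ₀ + ∫ t in ρ₀..ρ, E' t)
    (hnonneg : ∀ ρ ∈ Icc ρ₀ ρ₁, 0 ≤ E ρ)
    (hineq : ∀ᵐ ρ ∂(volume.restrict (Ioo ρ₀ ρ₁)),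
      E ρ ^ (1 - α) ≤ K * E' ρ + ε * (ρ - ρ₀) ^ ((1 - α) / α))
    (hE₁ : E ρ₁ ≤ (α / (2 * K) * (ρ₁ - ρ₀)) ^ (1 / α))
    (hεsmall : ε ≤ (1 / 2) * (α / (2 * K)) ^ ((1 - α) / α)) :
    E ρ₀ = 0 := by
  set c := α / (2 * K)
  have hc : 0 < c := div_pos hα.1 (by positivity)
  set G : ℝ → ℝ := fun ρ => (c * (ρ - ρ₀)) ^ (1 / α)
  set G' : ℝ → ℝ := fun ρ => c / α * (c * (ρ - ρ₀)) ^ ((1 - α) / α)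
  have hG'cont : Continuous G' :=
    continuous_const.mul (continuous_mul_sub_rpow (div_nonneg (by linarith [hα.2]) hα.1.le))
  have hG : ∀ x ∈ Icc ρ₀ ρ₁, G x = G ρ₀ + ∫ t in ρ₀..x, G' t := fun x _ => by
    rw [intervalIntegral.integral_eq_sub_of_hasDerivAt
      (fun t _ => hasDerivAt_mul_sub_rpow_inv hα.1 hα.2.le t) (hG'cont.intervalIntegrable ρ₀ x)]
    ring
  have hcompare : ∀ᵐ ρ ∂(volume.restrict (Ioo ρ₀ ρ₁)), G ρ < E ρ → G' ρ ≤ E' ρ := by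
    filter_upwards [hineq, ae_restrict_mem measurableSet_Ioo] with ρ hρE hρmem hGE
    have hG_nonneg : 0 ≤ G ρ := Real.rpow_nonneg (mul_nonneg hc.le (sub_nonneg.mpr hρmem.1.le)) _
    have hmono : G ρ ^ (1 - α) ≤ E ρ ^ (1 - α) :=
      Real.rpow_le_rpow hG_nonneg hGE.le (by linarith [hα.2])
    have := supersolution_le hα.1 hK hεsmall hρmem.1.le
    exact le_of_mul_le_mul_left (by linarith) hK
  refine le_antisymm ?_ (hnonneg ρ₀ ⟨le_rfl, hρ.le⟩)
  by_contra! hE₀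
  have hG₀ : G ρ₀ = 0 := by simp [G, Real.zero_rpow (inv_pos.mpr hα.1).ne']
  exact (lt_of_ae_deriv_le_of_lt hρ.le hG'cont.integrableOn_Icc hG
    ((integrableOn_Icc_iff_integrableOn_Ioo).mpr hE'int) hAC hcompare (hG₀ ▸ hE₀)).not_ge hE₁

theorem stmt2 (α K ρ₀ ρ₁ ε : ℝ) (hα : α ∈ Ioo (0:ℝ) 1) (hK : 0 < K)
    (hρ₀ : 0 < ρ₀) (hρ : ρ₀ < ρ₁) (hε : 0 < ε) (E E' : ℝ → ℝ)
    (hE'int : IntegrableOn E' (Ioo ρ₀ ρ₁))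
    (hAC : ∀ ρ ∈ Icc ρ₀ ρ₁, E ρ = E ρ₀ + ∫ t in ρ₀..ρ, E' t)
    (hnonneg : ∀ ρ ∈ Icc ρ₀ ρ₁, 0 ≤ E ρ)
    (hineq : ∀ᵐ ρ ∂(volume.restrict (Ioo ρ₀ ρ₁)),
      E ρ ^ (1 - α) ≤ K * E' ρ + ε * (ρ - ρ₀) ^ ((1 - α) / α))
    (hE₁ : E ρ₁ ≤ (α / (2 * K) * (ρ₁ - ρ₀)) ^ (1 / α))
    (hεsmall : ε ≤ (1 / 2) * (α / (2 * K)) ^ ((1 - α) / α)) :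
    E ρ₀ = 0 :=
  stmt2_general α K ρ₀ ρ₁ ε hα hK hρ E E' hE'int hAC hnonneg hineq hE₁ hεsmall
end
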